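/- Let 0 < η_ch ≤ 1, 0 < η_dis ≤ 1, p_b ≥ p_s ≥ 0, z ∈ ℝ, and define f(x) = (1/η_ch)·max(x,0) − η_dis·max(−x,0) and C(x) = p_b·max(z + f(x), 0) − p_s·max(−(z + f(x)), 0). Then for all x ∈ ℝ, C(x) = max{(p_b/η_ch)·x + z·p_b, p_s·η_dis·x + z·p_s, p_b·η_dis·x + z·p_b, (p_s/η_ch)·x + z·p_s}. -/
import Mathlib

lemma net_aux (pb ps w : ℝ) (hps : 0 ≤ ps) (hpbs : ps ≤ pb) :
    pb * max w 0 - ps * max (-w) 0 = max (pb * w) (ps * w) := by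
  rcases le_total 0 w with h | h
  · rw [max_eq_left h, max_eq_right (by linarith : -w ≤ 0),
      max_eq_left (by nlinarith : ps * w ≤ pb * w)]
    ring
  · rw [max_eq_right h, max_eq_left (by linarith : 0 ≤ -w),
      max_eq_right (by nlinarith : pb * w ≤ ps * w)]
    ring

theorem stmt_7 (ηch ηdis pb ps z : ℝ) (hch : 0 < ηch) (hch1 : ηch ≤ 1)
    (hdis : 0 < ηdis) (hdis1 : ηdis ≤ 1) (hps : 0 ≤ ps) (hpbs : ps ≤ pb) (x : ℝ) :
    pb * max (z + ((1 / ηch) * max x 0 - ηdis * max (-x) 0)) 0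
      - ps * max (-(z + ((1 / ηch) * max x 0 - ηdis * max (-x) 0))) 0
    = max (max ((pb / ηch) * x + z * pb) (ps * ηdis * x + z * ps))
          (max (pb * ηdis * x + z * pb) ((ps / ηch) * x + z * ps)) := by
  have hpb : 0 ≤ pb := le_trans hps hpbs
  have hinv : 1 ≤ 1 / ηch := by
    rw [le_div_iff₀ hch]; linarith
  rcases le_total 0 x with hx | hx
  · rw [max_eq_left hx, max_eq_right (by linarith : -x ≤ 0), mul_zero, sub_zero,
      net_aux pb ps _ hps hpbs]
    have hA : pb * (z + 1 / ηch * x) = (pb / ηch) * x + z * pb := by ring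
    have hD : ps * (z + 1 / ηch * x) = (ps / ηch) * x + z * ps := by ring
    rw [hA, hD]
    have hBD : ps * ηdis * x + z * ps ≤ (ps / ηch) * x + z * ps := by
      have : ps * ηdis ≤ ps / ηch := by
        rw [div_eq_mul_inv, ← one_div]
        nlinarith
      nlinarith
    have hCA : pb * ηdis * x + z * pb ≤ (pb / ηch) * x + z * pb := by
      have : pb * ηdis ≤ pb / ηch := by
        rw [div_eq_mul_inv, ← one_div]
        nlinarith
      nlinarith
    apply le_antisymm
    · exact max_le (le_max_of_le_left (le_max_left _ _))
        (le_max_of_le_right (le_max_right _ _))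
    · exact max_le (max_le (le_max_left _ _) (le_trans hBD (le_max_right _ _)))
        (max_le (le_trans hCA (le_max_left _ _)) (le_max_right _ _))
  · rw [max_eq_right hx, max_eq_left (by linarith : 0 ≤ -x), mul_zero, zero_sub,
      net_aux pb ps _ hps hpbs]
    have hC : pb * (z + -(ηdis * -x)) = pb * ηdis * x + z * pb := by ring
    have hB : ps * (z + -(ηdis * -x)) = ps * ηdis * x + z * ps := by ring
    rw [hC, hB]
    have hAC : (pb / ηch) * x + z * pb ≤ pb * ηdis * x + z * pb := by
      have : pb * ηdis ≤ pb / ηch := by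
        rw [div_eq_mul_inv, ← one_div]
        have h1 : 1 ≤ 1 / ηch := hinv
        nlinarith
      nlinarith
    have hDB : (ps / ηch) * x + z * ps ≤ ps * ηdis * x + z * ps := by
      have : ps * ηdis ≤ ps / ηch := by
        rw [div_eq_mul_inv, ← one_div]
        nlinarith
      nlinarith
    apply le_antisymm
    · exact max_le (le_max_of_le_right (le_max_left _ _))
        (le_max_of_le_left (le_max_right _ _))
    · exact max_le (max_le (le_trans hAC (le_max_left _ _)) (le_max_right _ _))
        (max_le (le_max_left _ _) (le_trans hDB (le_max_right _ _)))
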